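/- Every generic closed regular curve γ in ℝ² satisfies μ(γ) ≤ 2·#_γ, where #_γ is the number of crossings of γ. -/

import Mathlib

/-!
Let `c₁ < ⋯ < c_{2m}` be the crossing parameters in `[0, 1)` and let `2δ` be smaller than
every gap of `c₁ < ⋯ < c_{2m} < 1`. Put `Φ(cᵢ + δ) = (-1)^(i-1)`, `Φ(cᵢ + 2δ) = -(-1)^(i-1)`,
`Φ = 0` elsewhere on `[0, 1)`, and extend `Φ` periodically. Every polygon has an arc that
starts at a crossing parameter, and both signs occur on that arc right after its start, so `Φ`
is admissible. Along the circle `Φ` reads `+, -, -, +, +, -, …`: the sign changes only inside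
the pairs, and since `2m` is even the cyclic sequence closes up without a further change, so
`μ(Φ) = 2m`.
-/

open Set

noncomputable section

/-- The 2×2 determinant of two plane vectors. -/
def det2 (v w : ℝ × ℝ) : ℝ := v.1 * w.2 - v.2 * w.1

/-- Rotation of a plane vector by +π/2 (the leftward normal direction). -/
def leftNormal (v : ℝ × ℝ) : ℝ × ℝ := (-v.2, v.1)

/-- A closed regular planar curve: a smooth 1-periodic map `ℝ → ℝ²`
with nowhere vanishing derivative. -/
structure PlanarCurve where
  toFun : ℝ → ℝ × ℝ
  smooth : ContDiff ℝ (⊤ : ℕ∞) toFun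
  periodic : Function.Periodic toFun 1
  regular : ∀ t : ℝ, deriv toFun t ≠ 0

/-- `det(γ̇(t), γ̈(t))`; its zeros are the inflection points of `γ`. -/
def curvDet (γ : PlanarCurve) (t : ℝ) : ℝ :=
  det2 (deriv γ.toFun t) (deriv (deriv γ.toFun) t)

/-- The signed curvature `κ_γ(t) = det(γ̇(t), γ̈(t))/|γ̇(t)|³`. -/
def curvature (γ : PlanarCurve) (t : ℝ) : ℝ :=
  curvDet γ t / ‖deriv γ.toFun t‖ ^ 3

/-- `t` is a parameter mapping to a self-intersection point of `γ`. -/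
def IsCrossingParam (γ : PlanarCurve) (t : ℝ) : Prop :=
  ∃ s : ℝ, γ.toFun s = γ.toFun t ∧ ∀ k : ℤ, s ≠ t + k

/-- The set of self-intersection (crossing) points of `γ` in the plane. -/
def crossingSet (γ : PlanarCurve) : Set (ℝ × ℝ) :=
  {p | ∃ t : ℝ, γ.toFun t = p ∧ IsCrossingParam γ t}

/-- `#_γ`, the number of crossings of `γ`. -/
def crossingCount (γ : PlanarCurve) : ℕ := (crossingSet γ).ncard

/-- The inflection parameters of `γ` in one period. -/
def inflectionSet (γ : PlanarCurve) : Set ℝ :=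
  {t ∈ Ico (0 : ℝ) 1 | curvDet γ t = 0}

/-- `i_γ`, the number of inflection points of `γ` in one period. -/
def inflectionCount (γ : PlanarCurve) : ℕ := (inflectionSet γ).ncard

/-- Genericity: the self-intersections form a finite set of transversal double
points, and all the zeros of the curvature are nondegenerate. -/
def IsGeneric (γ : PlanarCurve) : Prop :=
  (crossingSet γ).Finite ∧
  (∀ t s : ℝ, γ.toFun s = γ.toFun t → (∀ k : ℤ, s ≠ t + k) →
      det2 (deriv γ.toFun t) (deriv γ.toFun s) ≠ 0 ∧
      ∀ u : ℝ, γ.toFun u = γ.toFun t →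
        (∃ k : ℤ, u = t + k) ∨ (∃ k : ℤ, u = s + k)) ∧
  (∀ t : ℝ, curvDet γ t = 0 → deriv (curvDet γ) t ≠ 0)

/-- The Jacobian determinant of a map `φ : ℝ² → ℝ²`. -/
def jacDet (φ : ℝ × ℝ → ℝ × ℝ) (p : ℝ × ℝ) : ℝ :=
  det2 (fderiv ℝ φ p (1, 0)) (fderiv ℝ φ p (0, 1))

/-- Two curves are geotopic (have the same topological type) if an
orientation-preserving diffeomorphism of the plane maps the image of one
onto the image of the other. -/
def Geotopic (γ₁ γ₂ : PlanarCurve) : Prop :=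
  ∃ φ ψ : ℝ × ℝ → ℝ × ℝ,
    ContDiff ℝ (⊤ : ℕ∞) φ ∧ ContDiff ℝ (⊤ : ℕ∞) ψ ∧
    (∀ p, ψ (φ p) = p) ∧ (∀ p, φ (ψ p) = p) ∧
    (∀ p, 0 < jacDet φ p) ∧
    φ '' (Set.range γ₁.toFun) = Set.range γ₂.toFun

/-- `I(γ)`: the minimal number of inflection points among generic curves
geotopic to `γ`. -/
def I (γ : PlanarCurve) : ℕ :=
  sInf {k : ℕ | ∃ σ : PlanarCurve, IsGeneric σ ∧ Geotopic γ σ ∧ inflectionCount σ = k}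

/-- `γ` has rotation index `m`: the continuous angle function of the unit
tangent vector increases by `2πm` over one period. -/
def HasRotationIndex (γ : PlanarCurve) (m : ℤ) : Prop :=
  ∃ θ : ℝ → ℝ, Continuous θ ∧
    (∀ t : ℝ, deriv γ.toFun t = ‖deriv γ.toFun t‖ • (Real.cos (θ t), Real.sin (θ t))) ∧
    θ 1 = θ 0 + 2 * Real.pi * m

/-- An (admissible-to-be) `n`-gon of `γ`: a disjoint union of `n` proper
closed arcs of `S¹ = ℝ/ℤ` with endpoints at crossing parameters, whose image
is a (piecewise smooth) simple closed curve, together with its interior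
domain `D` and the orientation data putting `D` on the left. -/
structure CurvePolygon (γ : PlanarCurve) where
  /-- the number of arcs -/
  n : ℕ
  npos : 0 < n
  /-- left endpoints of the arcs -/
  a : Fin n → ℝ
  /-- right endpoints of the arcs -/
  b : Fin n → ℝ
  lt : ∀ i, a i < b i
  /-- the arcs are pairwise disjoint and cyclically ordered within one period -/
  ordered : ∀ i : Fin n,
    (∀ h : (i : ℕ) + 1 < n, b i < a ⟨(i : ℕ) + 1, h⟩) ∧
    ((i : ℕ) + 1 = n → b i < a ⟨0, npos⟩ + 1)
  crossing_a : ∀ i, IsCrossingParam γ (a i)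
  crossing_b : ∀ i, IsCrossingParam γ (b i)
  /-- the image `γ(J)` is a simple closed curve -/
  jordan : Nonempty ((γ.toFun '' (⋃ i, Icc (a i) (b i))) ≃ₜ Circle)
  /-- the interior domain -/
  D : Set (ℝ × ℝ)
  D_open : IsOpen D
  D_bounded : Bornology.IsBounded D
  D_conn : IsConnected D
  D_simplyConnected : SimplyConnectedSpace ↥D
  D_frontier : frontier D = γ.toFun '' (⋃ i, Icc (a i) (b i))
  /-- the sign `ε_J` on each arc -/
  eps : Fin n → ℤ
  eps_pm : ∀ i, eps i = 1 ∨ eps i = -1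
  /-- traversing arc `i` in the direction given by `eps i`, the interior
  domain `D` lies on the left -/
  eps_left : ∀ i, ∀ t ∈ Ioo (a i) (b i), ∃ δ > 0, ∀ s ∈ Ioo (0 : ℝ) δ,
      γ.toFun t + s • leftNormal ((eps i : ℝ) • deriv γ.toFun t) ∈ D
  /-- the combinatorial successor: arc `next i` starts at the vertex where
  arc `i` ends -/
  next : Equiv.Perm (Fin n)
  next_match : ∀ i, γ.toFun (if eps i = 1 then b i else a i)
      = γ.toFun (if eps (next i) = 1 then a (next i) else b (next i))

namespace CurvePolygon

variable {γ : PlanarCurve}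

/-- The incoming unit-scale tangent direction at the end vertex of arc `i`. -/
def incoming (J : CurvePolygon γ) (i : Fin J.n) : ℝ × ℝ :=
  (J.eps i : ℝ) • deriv γ.toFun (if J.eps i = 1 then J.b i else J.a i)

/-- The outgoing tangent direction at the start vertex of arc `i`. -/
def outgoing (J : CurvePolygon γ) (i : Fin J.n) : ℝ × ℝ :=
  (J.eps i : ℝ) • deriv γ.toFun (if J.eps i = 1 then J.a i else J.b i)

/-- The interior angle at the vertex following arc `i` is less than `π`
(all vertices are transversal crossings, so angles are never `0` or `π`). -/
def AngleLtPi (J : CurvePolygon γ) (i : Fin J.n) : Prop :=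
  0 < det2 (J.incoming i) (J.outgoing (J.next i))

/-- Admissibility: at most two of the interior angles are less than `π`. -/
def Admissible (J : CurvePolygon γ) : Prop :=
  {i : Fin J.n | J.AngleLtPi i}.ncard ≤ 2

/-- A positive polygon: every arc is traversed in the direction of `γ`. -/
def Positive (J : CurvePolygon γ) : Prop := ∀ i, J.eps i = 1

/-- A negative polygon: every arc is traversed against the direction of `γ`. -/
def Negative (J : CurvePolygon γ) : Prop := ∀ i, J.eps i = -1

end CurvePolygon

/-- A shell (1-gon) of `γ` with arc `[x, y]` and sign `sgn`. -/
def IsShell (γ : PlanarCurve) (x y : ℝ) (sgn : ℤ) : Prop :=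
  ∃ J : CurvePolygon γ, J.n = 1 ∧ ∀ i : Fin J.n, J.a i = x ∧ J.b i = y ∧ J.eps i = sgn

/-- An admissible function for `γ`: a `{0, ±1}`-valued 1-periodic function on
`S¹_γ` (vanishing at the crossing parameters) with finite support, such that
every admissible polygon `J` contains a support point `t` with `Φ t = ε_J t`. -/
def IsAdmissibleFun (γ : PlanarCurve) (Φ : ℝ → ℤ) : Prop :=
  Function.Periodic Φ 1 ∧
  (∀ t, Φ t = 0 ∨ Φ t = 1 ∨ Φ t = -1) ∧
  (∀ t, IsCrossingParam γ t → Φ t = 0) ∧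
  {t ∈ Ico (0 : ℝ) 1 | Φ t ≠ 0}.Finite ∧
  ∀ J : CurvePolygon γ, J.Admissible →
    ∃ i : Fin J.n, ∃ t ∈ Ioo (J.a i) (J.b i), Φ t = J.eps i

/-- The support of `Φ` within one period. -/
def suppIn (Φ : ℝ → ℤ) : Set ℝ := {t ∈ Ico (0 : ℝ) 1 | Φ t ≠ 0}

/-- The cyclic successor of `x` in a (finite) set `S ⊆ [0,1)`. -/
def nextPt (S : Set ℝ) (x : ℝ) : ℝ := by
  classical exact if (∃ y ∈ S, x < y) then sInf {y ∈ S | x < y} else sInf S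

/-- `μ(Φ)`: the number of cyclic sign changes of the nonzero values of `Φ`. -/
def muFun (Φ : ℝ → ℤ) : ℕ :=
  {t ∈ suppIn Φ | Φ t ≠ Φ (nextPt (suppIn Φ) t)}.ncard

/-- The invariant `μ(γ)`: the minimum of `μ(Φ)` over admissible functions. -/
def mu (γ : PlanarCurve) : ℕ :=
  sInf {k : ℕ | ∃ Φ : ℝ → ℤ, IsAdmissibleFun γ Φ ∧ muFun Φ = k}

/-! ### Double tangents -/

/-- The line through `p` with direction `v`. -/
def lineThrough (p v : ℝ × ℝ) : Set (ℝ × ℝ) := {q | det2 v (q - p) = 0}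

/-- The points of the line through `p` with direction `v` at which the line is
tangent to `γ`. -/
def tangentPts (γ : PlanarCurve) (p v : ℝ × ℝ) : Set (ℝ × ℝ) :=
  {q | det2 v (q - p) = 0 ∧ ∃ t : ℝ, γ.toFun t = q ∧ det2 v (deriv γ.toFun t) = 0}

/-- `L` is a double tangent of `γ`: a line tangent to `γ` at exactly two
points of its image. -/
def IsDoubleTangent (γ : PlanarCurve) (L : Set (ℝ × ℝ)) : Prop :=
  ∃ p v : ℝ × ℝ, v ≠ 0 ∧ L = lineThrough p v ∧ (tangentPts γ p v).ncard = 2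

/-- Near the parameter `t`, the curve lies (weakly) on the `σ`-side of the
line through `p` with direction `v`. -/
def LocallyOnSide (γ : PlanarCurve) (p v : ℝ × ℝ) (t : ℝ) (σ : ℝ) : Prop :=
  ∃ δ > 0, ∀ s : ℝ, |s - t| < δ → 0 ≤ σ * det2 v (γ.toFun s - p)

/-- A same-side double tangent: near both tangency points the curve lies on
the same side of the line. -/
def IsSameSideDT (γ : PlanarCurve) (L : Set (ℝ × ℝ)) : Prop :=
  ∃ p v : ℝ × ℝ, v ≠ 0 ∧ L = lineThrough p v ∧ (tangentPts γ p v).ncard = 2 ∧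
    ∃ σ : ℝ, (σ = 1 ∨ σ = -1) ∧
      ∀ t : ℝ, γ.toFun t ∈ tangentPts γ p v → det2 v (deriv γ.toFun t) = 0 →
        LocallyOnSide γ p v t σ

/-- An opposite-side double tangent: near the two tangency points the curve
lies on opposite sides of the line. -/
def IsOppSideDT (γ : PlanarCurve) (L : Set (ℝ × ℝ)) : Prop :=
  ∃ p v : ℝ × ℝ, v ≠ 0 ∧ L = lineThrough p v ∧ (tangentPts γ p v).ncard = 2 ∧
    ∃ t₁ t₂ : ℝ, γ.toFun t₁ ≠ γ.toFun t₂ ∧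
      γ.toFun t₁ ∈ tangentPts γ p v ∧ γ.toFun t₂ ∈ tangentPts γ p v ∧
      det2 v (deriv γ.toFun t₁) = 0 ∧ det2 v (deriv γ.toFun t₂) = 0 ∧
      LocallyOnSide γ p v t₁ 1 ∧ LocallyOnSide γ p v t₂ (-1)

/-- `d₁(γ)`: the number of same-side double tangents. -/
def d1 (γ : PlanarCurve) : ℕ := {L : Set (ℝ × ℝ) | IsSameSideDT γ L}.ncard

/-- `d₂(γ)`: the number of opposite-side double tangents. -/
def d2 (γ : PlanarCurve) : ℕ := {L : Set (ℝ × ℝ) | IsOppSideDT γ L}.ncard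

/-- `d(γ) = d₁(γ) + d₂(γ)`: the number of double tangents. -/
def dTot (γ : PlanarCurve) : ℕ := d1 γ + d2 γ

/-- Genericity of the tangent lines: finitely many double tangents, no line
tangent at three or more points, and no double tangent touching `γ` at an
inflection point. -/
def HasGenericTangents (γ : PlanarCurve) : Prop :=
  {L : Set (ℝ × ℝ) | IsDoubleTangent γ L}.Finite ∧
  (∀ p v : ℝ × ℝ, v ≠ 0 → 2 ≤ (tangentPts γ p v).ncard → (tangentPts γ p v).ncard = 2) ∧
  (∀ p v : ℝ × ℝ, v ≠ 0 → 2 ≤ (tangentPts γ p v).ncard →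
    ∀ t : ℝ, det2 v (γ.toFun t - p) = 0 → det2 v (deriv γ.toFun t) = 0 →
      curvDet γ t ≠ 0)

/-- `δ(γ)`: the minimal number of double tangents among generic curves
geotopic to `γ`. -/
def delta (γ : PlanarCurve) : ℕ :=
  sInf {k : ℕ | ∃ σ : PlanarCurve, IsGeneric σ ∧ HasGenericTangents σ ∧
    Geotopic γ σ ∧ dTot σ = k}

/-- `I(γ)` where the minimum is taken over curves generic also with respect to
double tangents. -/
def Idt (γ : PlanarCurve) : ℕ :=
  sInf {k : ℕ | ∃ σ : PlanarCurve, IsGeneric σ ∧ HasGenericTangents σ ∧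
    Geotopic γ σ ∧ inflectionCount σ = k}

open Filter Topology

section NextPt

lemma Set.Finite.isLeast_csInf {α : Type*} [ConditionallyCompleteLinearOrder α] {s : Set α}
    (hs : s.Finite) (hne : s.Nonempty) : IsLeast s (sInf s) :=
  ⟨hne.csInf_mem hs, fun _ hz => csInf_le hs.bddBelow hz⟩

variable {S : Set ℝ} {x y : ℝ}

lemma nextPt_eq_of_isLeast (hy : IsLeast {z ∈ S | x < z} y) : nextPt S x = y := by
  rw [nextPt, if_pos ⟨y, hy.1⟩]
  exact hy.csInf_eq

lemma nextPt_eq_of_forall_le (h : ∀ z ∈ S, z ≤ x) (hy : IsLeast S y) : nextPt S x = y := by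
  rw [nextPt, if_neg fun ⟨z, hz, hxz⟩ => (h z hz).not_gt hxz]
  exact hy.csInf_eq

lemma isLeast_nextPt (hS : S.Finite) (h : ∃ y ∈ S, x < y) :
    IsLeast {z ∈ S | x < z} (nextPt S x) := by
  rw [nextPt, if_pos h]
  obtain ⟨y, hy⟩ := h
  exact (hS.subset fun _ hz => hz.1).isLeast_csInf ⟨y, hy⟩

lemma isLeast_nextPt_of_forall_le (hS : S.Finite) (hne : S.Nonempty) (h : ∀ z ∈ S, z ≤ x) :
    IsLeast S (nextPt S x) := by
  rw [nextPt_eq_of_forall_le h (hS.isLeast_csInf hne)]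
  exact hS.isLeast_csInf hne

lemma nextPt_mem (hS : S.Finite) (hne : S.Nonempty) (x : ℝ) : nextPt S x ∈ S := by
  by_cases h : ∃ y ∈ S, x < y
  · exact (isLeast_nextPt hS h).1.1
  · push Not at h
    exact (isLeast_nextPt_of_forall_le hS hne fun z hz => h z hz).1

end NextPt

section AlternatingPairs

variable {C : Finset ℝ} {δ r c : ℝ}

def GapsExceed (C : Finset ℝ) (r : ℝ) : Prop :=
  ∀ c ∈ C, ∀ x ∈ insert 1 C, c < x → c + r < x

lemma exists_pos_gapsExceed (C : Finset ℝ) : ∃ r > 0, GapsExceed C r := by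
  have hev : ∀ᶠ r in 𝓝[>] (0 : ℝ), GapsExceed C r := by
    simp only [GapsExceed, eventually_all_finset]
    intro c _ x _
    by_cases hcx : c < x
    · have hlim : Tendsto (fun r : ℝ => c + r) (𝓝[>] 0) (𝓝 c) :=
        ((continuous_const_add c).tendsto' 0 c (add_zero c)).mono_left nhdsWithin_le_nhds
      filter_upwards [hlim.eventually_lt_const hcx] with r hr _ using hr
    · exact Eventually.of_forall fun _ h => absurd h hcx
  exact (hev.and self_mem_nhdsWithin).exists.imp fun r h => ⟨h.2, h.1⟩

lemma GapsExceed.add_notMem (h : GapsExceed C r) (hc : c ∈ C) {s : ℝ} (hs : 0 < s)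
    (hsr : s ≤ r) : c + s ∉ C := fun hcs =>
  (h c hc (c + s) (Finset.mem_insert_of_mem hcs) (by linarith)).not_ge (by linarith)

lemma GapsExceed.add_lt_one (h : GapsExceed C r) (hc : c ∈ C) (hc1 : c < 1) : c + r < 1 :=
  h c hc 1 (Finset.mem_insert_self 1 C) hc1

def altSign (C : Finset ℝ) (c : ℝ) : ℤ := (-1) ^ (C.filter (· < c)).card

lemma altSign_eq_or (C : Finset ℝ) (c : ℝ) : altSign C c = 1 ∨ altSign C c = -1 :=
  neg_one_pow_eq_or ℤ _

lemma altSign_nextPt (heven : Even C.card) (hc : c ∈ C) :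
    altSign C (nextPt C c) = -altSign C c := by
  by_cases h : ∃ y ∈ (C : Set ℝ), c < y
  · obtain ⟨⟨-, hlt⟩, hleast⟩ := isLeast_nextPt C.finite_toSet h
    have hfilter : C.filter (· < nextPt C c) = insert c (C.filter (· < c)) := by
      ext x
      simp only [Finset.mem_filter, Finset.mem_insert]
      constructor
      · rintro ⟨hx, hxc'⟩
        rcases lt_trichotomy x c with hxc | rfl | hcx
        · exact Or.inr ⟨hx, hxc⟩
        · exact Or.inl rfl
        · exact absurd (hleast ⟨hx, hcx⟩) hxc'.not_ge
      · rintro (rfl | ⟨hx, hxc⟩)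
        · exact ⟨hc, hlt⟩
        · exact ⟨hx, hxc.trans hlt⟩
    rw [altSign, altSign, hfilter, Finset.card_insert_of_notMem (by simp), pow_succ, mul_neg_one]
  · push Not at h
    have hne : (C : Set ℝ).Nonempty := ⟨c, hc⟩
    have hmin := isLeast_nextPt_of_forall_le C.finite_toSet hne h
    have hfirst : C.filter (· < nextPt C c) = ∅ :=
      Finset.filter_eq_empty_iff.2 fun x hx => (hmin.2 hx).not_gt
    have hlast : C.filter (· < c) = C.erase c := by
      ext x
      simp only [Finset.mem_filter, Finset.mem_erase]
      exact ⟨fun ⟨hx, hxc⟩ => ⟨hxc.ne, hx⟩,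
        fun ⟨hxc, hx⟩ => ⟨hx, (h x hx).lt_of_ne hxc⟩⟩
    have hodd : Odd (C.erase c).card := by
      rw [Finset.card_erase_of_mem hc]
      exact Nat.Even.sub_odd (Finset.card_pos.2 ⟨c, hc⟩) heven odd_one
    rw [altSign, altSign, hfirst, hlast, hodd.neg_one_pow, Finset.card_empty, pow_zero, neg_neg]

def pairProfile (C : Finset ℝ) (δ x : ℝ) : ℤ :=
  if x - δ ∈ C then altSign C (x - δ)
  else if x - 2 * δ ∈ C then -altSign C (x - 2 * δ)
  else 0

def pairFun (C : Finset ℝ) (δ t : ℝ) : ℤ := pairProfile C δ (Int.fract t)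

lemma pairProfile_add (hc : c ∈ C) : pairProfile C δ (c + δ) = altSign C c := by
  simp [pairProfile, hc]

lemma pairProfile_add_two_mul (hδ : 0 < δ) (hgap : GapsExceed C (2 * δ)) (hc : c ∈ C) :
    pairProfile C δ (c + 2 * δ) = -altSign C c := by
  have hcδ : c + δ ∉ C := hgap.add_notMem hc hδ (by linarith)
  simp [pairProfile, hc, show c + 2 * δ - δ = c + δ by ring, hcδ]

lemma pairProfile_of_mem (hδ : 0 < δ) (hgap : GapsExceed C (2 * δ)) (hc : c ∈ C) :
    pairProfile C δ c = 0 := by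
  have h₁ : c - δ ∉ C := fun h => hgap.add_notMem h hδ (by linarith) (by simpa using hc)
  have h₂ : c - 2 * δ ∉ C := fun h =>
    hgap.add_notMem h (by positivity) le_rfl (by simpa using hc)
  simp [pairProfile, h₁, h₂]

lemma pairProfile_eq_or (C : Finset ℝ) (δ x : ℝ) :
    pairProfile C δ x = 0 ∨ pairProfile C δ x = 1 ∨ pairProfile C δ x = -1 := by
  unfold pairProfile
  split_ifs
  · exact Or.inr (altSign_eq_or C _)
  · exact Or.inr ((altSign_eq_or C _).symm.imp neg_eq_iff_eq_neg.2 neg_eq_iff_eq_neg.2)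
  · exact Or.inl rfl

lemma pairFun_periodic (C : Finset ℝ) (δ : ℝ) : Function.Periodic (pairFun C δ) 1 :=
  (Int.fract_periodic ℝ).comp _

lemma pairFun_of_mem_Ico {t : ℝ} (ht : t ∈ Ico (0 : ℝ) 1) :
    pairFun C δ t = pairProfile C δ t := by
  rw [pairFun, Int.fract_eq_self.2 ht]

lemma pairFun_add_of_fract_mem (hgap : GapsExceed C (2 * δ)) {a s : ℝ}
    (ha : Int.fract a ∈ C) (hs₀ : 0 ≤ s) (hs : s ≤ 2 * δ) :
    pairFun C δ (a + s) = pairProfile C δ (Int.fract a + s) := by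
  have hlt := hgap.add_lt_one ha (Int.fract_lt_one a)
  rw [pairFun]
  congr 1
  refine Int.fract_eq_iff.2 ⟨by linarith [Int.fract_nonneg a], by linarith, ⌊a⌋, ?_⟩
  rw [← Int.self_sub_fract a]
  ring

lemma pairFun_add_of_mem (hC : ∀ c ∈ C, c ∈ Ico (0 : ℝ) 1) (hgap : GapsExceed C (2 * δ))
    (hc : c ∈ C) {s : ℝ} (hs₀ : 0 ≤ s) (hs : s ≤ 2 * δ) :
    pairFun C δ (c + s) = pairProfile C δ (c + s) := by
  have hfract : Int.fract c = c := Int.fract_eq_self.2 (hC c hc)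
  rw [pairFun_add_of_fract_mem hgap (hfract.symm ▸ hc) hs₀ hs, hfract]

def pairSupport (C : Finset ℝ) (δ : ℝ) : Set ℝ := (· + δ) '' C ∪ (· + 2 * δ) '' C

lemma suppIn_pairFun (hC : ∀ c ∈ C, c ∈ Ico (0 : ℝ) 1) (hδ : 0 < δ)
    (hgap : GapsExceed C (2 * δ)) : suppIn (pairFun C δ) = pairSupport C δ := by
  ext t
  simp only [suppIn, pairSupport, mem_union, mem_image, Finset.mem_coe]
  constructor
  · rintro ⟨ht, hne⟩
    rw [pairFun_of_mem_Ico ht, pairProfile] at hne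
    split_ifs at hne with h₁ h₂
    · exact Or.inl ⟨_, h₁, by ring⟩
    · exact Or.inr ⟨_, h₂, by ring⟩
    · exact absurd rfl hne
  · have hmem : ∀ c ∈ C, ∀ s, 0 < s → s ≤ 2 * δ → c + s ∈ Ico (0 : ℝ) 1 :=
      fun c hc s hs hs' => ⟨by linarith [(hC c hc).1], by linarith [hgap.add_lt_one hc (hC c hc).2]⟩
    rintro (⟨c, hc, rfl⟩ | ⟨c, hc, rfl⟩)
    · refine ⟨hmem c hc δ hδ (by linarith), ?_⟩
      rw [pairFun_add_of_mem hC hgap hc hδ.le (by linarith), pairProfile_add hc]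
      exact (altSign_eq_or C c).elim (by omega) (by omega)
    · refine ⟨hmem c hc (2 * δ) (by linarith) le_rfl, ?_⟩
      rw [pairFun_add_of_mem hC hgap hc (by linarith) le_rfl, pairProfile_add_two_mul hδ hgap hc]
      exact (altSign_eq_or C c).elim (by omega) (by omega)

lemma nextPt_pairSupport (hδ : 0 < δ) (hgap : GapsExceed C (2 * δ)) (hc : c ∈ C) :
    nextPt (pairSupport C δ) (c + 2 * δ) = nextPt C c + δ := by
  by_cases h : ∃ y ∈ (C : Set ℝ), c < y
  · obtain ⟨⟨hc'C, hcc'⟩, hleast⟩ := isLeast_nextPt C.finite_toSet h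
    have hgap' := hgap c hc _ (Finset.mem_insert_of_mem hc'C) hcc'
    apply nextPt_eq_of_isLeast
    refine ⟨⟨Or.inl ⟨_, hc'C, rfl⟩, by linarith⟩, ?_⟩
    rintro z ⟨⟨e, he, rfl⟩ | ⟨e, he, rfl⟩, hz⟩ <;> dsimp only at hz ⊢
    · linarith [hleast ⟨he, by linarith⟩]
    · linarith [hleast ⟨he, by linarith⟩]
  · push Not at h
    have hmin := isLeast_nextPt_of_forall_le C.finite_toSet ⟨c, hc⟩ h
    apply nextPt_eq_of_forall_le
    · rintro z (⟨e, he, rfl⟩ | ⟨e, he, rfl⟩) <;> dsimp only <;> linarith [h e he]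
    · refine ⟨Or.inl ⟨_, hmin.1, rfl⟩, ?_⟩
      rintro z (⟨e, he, rfl⟩ | ⟨e, he, rfl⟩) <;> dsimp only <;> linarith [hmin.2 he]

lemma muFun_pairFun_le (hC : ∀ c ∈ C, c ∈ Ico (0 : ℝ) 1) (hδ : 0 < δ)
    (hgap : GapsExceed C (2 * δ)) (heven : Even C.card) : muFun (pairFun C δ) ≤ C.card := by
  have hsub : {t ∈ suppIn (pairFun C δ) |
      pairFun C δ t ≠ pairFun C δ (nextPt (suppIn (pairFun C δ)) t)} ⊆ (· + δ) '' C := by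
    rintro t ⟨ht, hchange⟩
    rw [suppIn_pairFun hC hδ hgap] at ht hchange
    rcases ht with ht | ⟨c, hc, rfl⟩
    · exact ht
    · have hc' := nextPt_mem C.finite_toSet ⟨c, hc⟩ c
      refine absurd ?_ hchange
      rw [nextPt_pairSupport hδ hgap hc, pairFun_add_of_mem hC hgap hc (by linarith) le_rfl,
        pairFun_add_of_mem hC hgap hc' hδ.le (by linarith), pairProfile_add_two_mul hδ hgap hc,
        pairProfile_add hc', altSign_nextPt heven hc]
  calc muFun (pairFun C δ) ≤ ((· + δ) '' (C : Set ℝ)).ncard :=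
        Set.ncard_le_ncard hsub (C.finite_toSet.image _)
    _ ≤ (C : Set ℝ).ncard := Set.ncard_image_le C.finite_toSet
    _ = C.card := Set.ncard_coe_finset C

end AlternatingPairs

section CrossingParams

variable {γ : PlanarCurve} {t : ℝ}

lemma PlanarCurve.toFun_add_int (γ : PlanarCurve) (t : ℝ) (k : ℤ) :
    γ.toFun (t + k) = γ.toFun t := by
  simpa using γ.periodic.int_mul k t

lemma PlanarCurve.toFun_fract (γ : PlanarCurve) (t : ℝ) :
    γ.toFun (Int.fract t) = γ.toFun t := by
  simpa [← Int.self_sub_floor, sub_eq_add_neg] using γ.toFun_add_int t (-⌊t⌋)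

lemma isCrossingParam_iff_mem_crossingSet :
    IsCrossingParam γ t ↔ γ.toFun t ∈ crossingSet γ := by
  refine ⟨fun h => ⟨t, rfl, h⟩, fun ⟨t₀, h₀, s₀, hs₀, hne⟩ => ?_⟩
  by_cases hshift : ∃ k : ℤ, t₀ = t + k
  · obtain ⟨k, rfl⟩ := hshift
    refine ⟨s₀, hs₀.trans h₀, fun j hj => hne (j - k) ?_⟩
    rw [hj]
    push_cast
    ring
  · push Not at hshift
    exact ⟨t₀, h₀, hshift⟩

lemma IsCrossingParam.add_int (h : IsCrossingParam γ t) (k : ℤ) :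
    IsCrossingParam γ (t + k) := by
  rwa [isCrossingParam_iff_mem_crossingSet, γ.toFun_add_int,
    ← isCrossingParam_iff_mem_crossingSet]

lemma IsCrossingParam.fract (h : IsCrossingParam γ t) : IsCrossingParam γ (Int.fract t) := by
  rwa [isCrossingParam_iff_mem_crossingSet, γ.toFun_fract, ← isCrossingParam_iff_mem_crossingSet]

def crossingParamSet (γ : PlanarCurve) : Set ℝ := {t ∈ Ico (0 : ℝ) 1 | IsCrossingParam γ t}

lemma eq_fract_of_mem_Ico {x : ℝ} (hx : x ∈ Ico (0 : ℝ) 1) {k : ℤ} (h : x = t + k) :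
    x = Int.fract t :=
  (Int.fract_eq_iff.2 ⟨hx.1, hx.2, -k, by rw [h]; push_cast; ring⟩).symm

lemma ncard_fiber_of_mem_crossingSet (hγ : IsGeneric γ) {p : ℝ × ℝ}
    (hp : p ∈ crossingSet γ) :
    {t ∈ Ico (0 : ℝ) 1 | γ.toFun t = p}.ncard = 2 := by
  obtain ⟨t₀, rfl, s₀, hs₀, hne⟩ := hp
  have hfiber :
      {t ∈ Ico (0 : ℝ) 1 | γ.toFun t = γ.toFun t₀} = {Int.fract t₀, Int.fract s₀} := by
    ext x
    simp only [mem_ofPred_eq, mem_insert_iff, mem_singleton_iff]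
    constructor
    · rintro ⟨hx, hγx⟩
      exact ((hγ.2.1 t₀ s₀ hs₀ hne).2 x hγx).imp (fun ⟨k, hk⟩ => eq_fract_of_mem_Ico hx hk)
        (fun ⟨k, hk⟩ => eq_fract_of_mem_Ico hx hk)
    · rintro (rfl | rfl)
      · exact ⟨⟨Int.fract_nonneg _, Int.fract_lt_one _⟩, γ.toFun_fract t₀⟩
      · exact ⟨⟨Int.fract_nonneg _, Int.fract_lt_one _⟩, (γ.toFun_fract s₀).trans hs₀⟩
  rw [hfiber, ncard_pair]
  intro h
  obtain ⟨z, hz⟩ := Int.fract_eq_fract.1 h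
  exact hne (-z) (by push_cast; linarith)

lemma crossingParamSet_eq_biUnion (γ : PlanarCurve) :
    crossingParamSet γ = ⋃ p ∈ crossingSet γ, {t ∈ Ico (0 : ℝ) 1 | γ.toFun t = p} := by
  ext t
  simp [crossingParamSet, isCrossingParam_iff_mem_crossingSet]

lemma crossingParamSet_finite (hγ : IsGeneric γ) : (crossingParamSet γ).Finite := by
  rw [crossingParamSet_eq_biUnion]
  exact hγ.1.biUnion fun p hp =>
    finite_of_ncard_ne_zero (by rw [ncard_fiber_of_mem_crossingSet hγ hp]; norm_num)

lemma ncard_crossingParamSet (hγ : IsGeneric γ) :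
    (crossingParamSet γ).ncard = 2 * crossingCount γ := by
  classical
  set C := (crossingParamSet_finite hγ).toFinset
  have hmaps : ∀ x ∈ C, γ.toFun x ∈ hγ.1.toFinset := fun x hx => by
    rw [Finite.mem_toFinset] at hx ⊢
    exact isCrossingParam_iff_mem_crossingSet.1 hx.2
  have hfiber : ∀ p ∈ hγ.1.toFinset, (C.filter (γ.toFun · = p)).card = 2 := fun p hp => by
    rw [← ncard_fiber_of_mem_crossingSet hγ (hγ.1.mem_toFinset.1 hp), ← Set.ncard_coe_finset]
    congr 1
    ext t
    simp only [Finset.coe_filter, C, Finite.mem_toFinset, crossingParamSet, mem_ofPred_eq]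
    constructor
    · exact fun ⟨⟨ht, _⟩, hγt⟩ => ⟨ht, hγt⟩
    · rintro ⟨ht, rfl⟩
      exact ⟨⟨ht, isCrossingParam_iff_mem_crossingSet.2 (hγ.1.mem_toFinset.1 hp)⟩, rfl⟩
  calc (crossingParamSet γ).ncard = C.card := by rw [← Set.ncard_coe_finset, Finite.coe_toFinset]
    _ = ∑ p ∈ hγ.1.toFinset, (C.filter (γ.toFun · = p)).card :=
      Finset.card_eq_sum_card_fiberwise hmaps
    _ = 2 * crossingCount γ := by
      rw [Finset.sum_congr rfl hfiber, Finset.sum_const, smul_eq_mul, crossingCount,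
        ncard_eq_toFinset_card _ hγ.1, mul_comm]

end CrossingParams

section Admissibility

variable {γ : PlanarCurve} {C : Finset ℝ} {δ : ℝ}

lemma mem_of_coe_eq_crossingParamSet (hC : (C : Set ℝ) = crossingParamSet γ) {x : ℝ} :
    x ∈ C ↔ x ∈ Ico (0 : ℝ) 1 ∧ IsCrossingParam γ x := by
  rw [← Finset.mem_coe, hC]
  rfl

lemma add_lt_of_isCrossingParam (hC : (C : Set ℝ) = crossingParamSet γ) {r : ℝ}
    (hgap : GapsExceed C r) {a b : ℝ} (ha : IsCrossingParam γ a) (hb : IsCrossingParam γ b)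
    (hab : a < b) : a + r < b := by
  have hc : Int.fract a ∈ C := (mem_of_coe_eq_crossingParamSet hC).2
    ⟨⟨Int.fract_nonneg a, Int.fract_lt_one a⟩, ha.fract⟩
  have hfloor := Int.floor_add_fract a
  obtain ⟨x, hx, hcx, hxb⟩ : ∃ x ∈ insert 1 C, Int.fract a < x ∧ x ≤ b - ⌊a⌋ := by
    by_cases hb1 : b - ⌊a⌋ < 1
    · refine ⟨_, Finset.mem_insert_of_mem ((mem_of_coe_eq_crossingParamSet hC).2
        ⟨⟨by linarith [Int.fract_nonneg a], hb1⟩, ?_⟩), by linarith, le_rfl⟩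
      simpa [sub_eq_add_neg] using hb.add_int (-⌊a⌋)
    · exact ⟨1, Finset.mem_insert_self 1 C, Int.fract_lt_one a, not_lt.1 hb1⟩
  linarith [hgap _ hc x hx hcx]

lemma isAdmissibleFun_pairFun (hC : (C : Set ℝ) = crossingParamSet γ) (hδ : 0 < δ)
    (hgap : GapsExceed C (2 * δ)) : IsAdmissibleFun γ (pairFun C δ) := by
  have hmem := @mem_of_coe_eq_crossingParamSet γ C hC
  have hC01 : ∀ c ∈ C, c ∈ Ico (0 : ℝ) 1 := fun c hc => (hmem.1 hc).1
  refine ⟨pairFun_periodic C δ, fun t => pairProfile_eq_or C δ _, fun t ht => ?_, ?_,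
    fun J _ => ?_⟩
  · exact pairProfile_of_mem hδ hgap
      (hmem.2 ⟨⟨Int.fract_nonneg t, Int.fract_lt_one t⟩, ht.fract⟩)
  · change (suppIn (pairFun C δ)).Finite
    rw [suppIn_pairFun hC01 hδ hgap]
    exact (C.finite_toSet.image _).union (C.finite_toSet.image _)
  · let i : Fin J.n := ⟨0, J.npos⟩
    have hc : Int.fract (J.a i) ∈ C :=
      hmem.2 ⟨⟨Int.fract_nonneg _, Int.fract_lt_one _⟩, (J.crossing_a i).fract⟩
    have hlt := add_lt_of_isCrossingParam hC hgap (J.crossing_a i) (J.crossing_b i) (J.lt i)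
    have h₁ : pairFun C δ (J.a i + δ) = altSign C (Int.fract (J.a i)) := by
      rw [pairFun_add_of_fract_mem hgap hc hδ.le (by linarith), pairProfile_add hc]
    have h₂ : pairFun C δ (J.a i + 2 * δ) = -altSign C (Int.fract (J.a i)) := by
      rw [pairFun_add_of_fract_mem hgap hc (by linarith) le_rfl,
        pairProfile_add_two_mul hδ hgap hc]
    have hI₁ : J.a i + δ ∈ Ioo (J.a i) (J.b i) := ⟨by linarith, by linarith⟩
    have hI₂ : J.a i + 2 * δ ∈ Ioo (J.a i) (J.b i) := ⟨by linarith, by linarith⟩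
    rcases J.eps_pm i with he | he <;> rcases altSign_eq_or C (Int.fract (J.a i)) with hs | hs
    · exact ⟨i, _, hI₁, by rw [h₁, hs, he]⟩
    · exact ⟨i, _, hI₂, by rw [h₂, hs, he, neg_neg]⟩
    · exact ⟨i, _, hI₂, by rw [h₂, hs, he]⟩
    · exact ⟨i, _, hI₁, by rw [h₁, hs, he]⟩

end Admissibility

theorem stmt10 (γ : PlanarCurve) (hγ : IsGeneric γ) :
    mu γ ≤ 2 * crossingCount γ := by
  classical
  set C := (crossingParamSet_finite hγ).toFinset
  have hC : (C : Set ℝ) = crossingParamSet γ := Finite.coe_toFinset _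
  have hC01 : ∀ c ∈ C, c ∈ Ico (0 : ℝ) 1 := fun c hc =>
    ((mem_of_coe_eq_crossingParamSet hC).1 hc).1
  have hcard : C.card = 2 * crossingCount γ := by
    rw [← ncard_crossingParamSet hγ, ← hC, Set.ncard_coe_finset]
  obtain ⟨r, hr, hgap⟩ := exists_pos_gapsExceed C
  have hδ : 0 < r / 2 := half_pos hr
  have hgap' : GapsExceed C (2 * (r / 2)) := by rwa [mul_div_cancel₀ r two_ne_zero]
  calc mu γ ≤ muFun (pairFun C (r / 2)) :=
        Nat.sInf_le ⟨_, isAdmissibleFun_pairFun hC hδ hgap', rfl⟩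
    _ ≤ C.card := muFun_pairFun_le hC01 hδ hgap' (hcard ▸ even_two_mul _)
    _ = 2 * crossingCount γ := hcard

end
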